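/- arXiv:math/0601498 — 4 statements merged into one kernel-verified Lean document; each statement's English description precedes it below -/
import Mathlib

section
/- The coefficients b_t(n_1,...,n_r) in the Hecke relation expansion x(n_1)···x(n_r) = Σ_{t} b_t(n_1,...,n_r) x(t) are always non-negative and satisfy b_t(n_1,...,n_r) ≤ τ(n_1)···τ(n_r), where τ is the divisor function. -/
/-- Existence of a "canonical" nonnegative coefficient representation. -/
private lemma hecke_exists_coeffs
    (R : Type*) [CommRing R] (x : ℕ → R)
    (hx1 : x 1 = 1)
    (hmul : ∀ m n : ℕ, 0 < m → 0 < n →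
      x m * x n = ∑ d ∈ (Nat.gcd m n).divisors, x (m * n / d ^ 2)) :
    ∀ (r : ℕ) (n : Fin r → ℕ), (∀ i, 0 < n i) →
      ∃ c : ℕ → ℤ,
        (∏ i, x (n i) = ∑ t ∈ (∏ i, n i).divisors, c t • x t) ∧
        (∀ t, 0 ≤ c t) ∧
        (∀ t, c t ≤ ∏ i, ((n i).divisors.card : ℤ)) := by
  intro r
  induction r with
  | zero =>
    intro n hn
    refine ⟨fun t => if t = 1 then 1 else 0, ?_, ?_, ?_⟩
    · simp [hx1]
    · intro t; dsimp only; split <;> simp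
    · intro t; dsimp only; split <;> simp
  | succ r ih =>
    intro n hn
    obtain ⟨c, hc, hc0, hcB⟩ := ih (fun i => n i.succ) (fun i => hn i.succ)
    set m := n 0 with hm
    set N' := ∏ i : Fin r, n i.succ with hN'
    have hm0 : 0 < m := hn 0
    have hN'0 : 0 < N' := Finset.prod_pos (fun i _ => hn i.succ)
    set B : ℤ := ∏ i : Fin r, ((n i.succ).divisors.card : ℤ) with hB
    have hB0 : 0 ≤ B := Finset.prod_nonneg (fun i _ => by positivity)
    -- the new coefficients
    refine ⟨fun s => ∑ t ∈ N'.divisors, ∑ d ∈ (Nat.gcd m t).divisors,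
      if d ∣ t ∧ m * t / d ^ 2 = s then c t else 0, ?_, ?_, ?_⟩
    · have hprod : (∏ i : Fin (r+1), n i) = m * N' := Fin.prod_univ_succ n
      rw [Fin.prod_univ_succ, hprod, hc]
      calc x m * ∑ t ∈ N'.divisors, c t • x t
          = ∑ t ∈ N'.divisors, ∑ d ∈ (Nat.gcd m t).divisors, c t • x (m * t / d ^ 2) := by
            rw [Finset.mul_sum]
            refine Finset.sum_congr rfl fun t ht => ?_
            have ht0 : 0 < t := Nat.pos_of_mem_divisors ht
            rw [mul_smul_comm, hmul m t hm0 ht0, Finset.smul_sum]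
        _ = ∑ s ∈ (m * N').divisors, (∑ t ∈ N'.divisors, ∑ d ∈ (Nat.gcd m t).divisors,
              if d ∣ t ∧ m * t / d ^ 2 = s then c t else 0) • x s := by
            refine Eq.symm ?_
            calc ∑ s ∈ (m * N').divisors, (∑ t ∈ N'.divisors, ∑ d ∈ (Nat.gcd m t).divisors,
                    if d ∣ t ∧ m * t / d ^ 2 = s then c t else 0) • x s
                = ∑ s ∈ (m * N').divisors, ∑ t ∈ N'.divisors, ∑ d ∈ (Nat.gcd m t).divisors,
                    (if d ∣ t ∧ m * t / d ^ 2 = s then c t • x s else 0) := by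
                  refine Finset.sum_congr rfl fun s _ => ?_
                  rw [Finset.sum_smul]
                  refine Finset.sum_congr rfl fun t _ => ?_
                  rw [Finset.sum_smul]
                  refine Finset.sum_congr rfl fun d _ => ?_
                  rw [ite_smul, zero_smul]
              _ = ∑ t ∈ N'.divisors, ∑ d ∈ (Nat.gcd m t).divisors, ∑ s ∈ (m * N').divisors,
                    (if d ∣ t ∧ m * t / d ^ 2 = s then c t • x s else 0) := by
                  rw [Finset.sum_comm]
                  exact Finset.sum_congr rfl fun t _ => Finset.sum_comm
              _ = ∑ t ∈ N'.divisors, ∑ d ∈ (Nat.gcd m t).divisors, c t • x (m * t / d ^ 2) := by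
                  refine Finset.sum_congr rfl fun t ht => Finset.sum_congr rfl fun d hd => ?_
                  have hdg : d ∣ Nat.gcd m t := (Nat.mem_divisors.mp hd).1
                  have hdt : d ∣ t := hdg.trans (Nat.gcd_dvd_right m t)
                  have hdm : d ∣ m := hdg.trans (Nat.gcd_dvd_left m t)
                  have hdsq : d ^ 2 ∣ m * t := by rw [pow_two]; exact mul_dvd_mul hdm hdt
                  have hmem : m * t / d ^ 2 ∈ (m * N').divisors := by
                    rw [Nat.mem_divisors]
                    refine ⟨dvd_trans ⟨d ^ 2, (Nat.div_mul_cancel hdsq).symm⟩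
                      (mul_dvd_mul_left m (Nat.mem_divisors.mp ht).1), ?_⟩
                    positivity
                  simp only [hdt, true_and]
                  rw [Finset.sum_ite_eq, if_pos hmem]
    · intro s
      refine Finset.sum_nonneg fun t _ => Finset.sum_nonneg fun d _ => ?_
      split <;> [exact hc0 t; rfl]
    · intro s
      rw [Fin.prod_univ_succ]
      have key : ∀ t ∈ N'.divisors,
          (∑ d ∈ (Nat.gcd m t).divisors, if d ∣ t ∧ m * t / d ^ 2 = s then c t else 0)
            ≤ ∑ d ∈ m.divisors, if d ∣ t ∧ m * t / d ^ 2 = s then c t else 0 := by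
        intro t ht
        refine Finset.sum_le_sum_of_subset_of_nonneg
          (Nat.divisors_subset_of_dvd hm0.ne' (Nat.gcd_dvd_left m t)) ?_
        intro d _ _; split <;> [exact hc0 t; rfl]
      calc (∑ t ∈ N'.divisors, ∑ d ∈ (Nat.gcd m t).divisors,
              if d ∣ t ∧ m * t / d ^ 2 = s then c t else 0)
          ≤ ∑ t ∈ N'.divisors, ∑ d ∈ m.divisors,
              if d ∣ t ∧ m * t / d ^ 2 = s then c t else 0 :=
            Finset.sum_le_sum key
        _ = ∑ d ∈ m.divisors, ∑ t ∈ N'.divisors,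
              if d ∣ t ∧ m * t / d ^ 2 = s then c t else 0 := Finset.sum_comm
        _ ≤ ∑ d ∈ m.divisors, B := by
            refine Finset.sum_le_sum fun d hd => ?_
            have hdm : d ∣ m := (Nat.mem_divisors.mp hd).1
            calc (∑ t ∈ N'.divisors, if d ∣ t ∧ m * t / d ^ 2 = s then c t else 0)
                ≤ ∑ t ∈ N'.divisors, if t = s * d ^ 2 / m then B else 0 := by
                  refine Finset.sum_le_sum fun t _ => ?_
                  split
                  · rename_i h
                    obtain ⟨hdt, hs⟩ := h
                    have hdsq : d ^ 2 ∣ m * t := by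
                      rw [pow_two]; exact mul_dvd_mul hdm hdt
                    have hmt : m * t = s * d ^ 2 := by
                      rw [← hs, Nat.div_mul_cancel hdsq]
                    have ht' : t = s * d ^ 2 / m := by
                      rw [← hmt, Nat.mul_div_cancel_left _ hm0]
                    rw [if_pos ht']
                    exact hcB t
                  · split <;> [exact hB0; rfl]
              _ ≤ B := by
                  rw [Finset.sum_ite_eq']
                  split <;> [rfl; exact hB0]
        _ = (m.divisors.card : ℤ) * B := by
            rw [Finset.sum_const, nsmul_eq_mul]

/-- The coefficients `b_t(n_1,…,n_r)` in the Hecke relation expansion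
`x n_1 ⋯ x n_r = ∑_t b_t(n_1,…,n_r) x t` are non-negative and satisfy
`b_t(n_1,…,n_r) ≤ τ(n_1) ⋯ τ(n_r)`, where `τ` is the divisor function. -/
theorem hecke_coefficients_nonneg_and_divisor_bound
    (R : Type*) [CommRing R] (x : ℕ → R)
    (hx1 : x 1 = 1)
    (hmul : ∀ m n : ℕ, 0 < m → 0 < n →
      x m * x n = ∑ d ∈ (Nat.gcd m n).divisors, x (m * n / d ^ 2))
    (hindep : LinearIndependent ℤ (fun t : {t : ℕ // 0 < t} => x t))
    (r : ℕ) (n : Fin r → ℕ) (hn : ∀ i, 0 < n i)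
    (b : ℕ → ℤ)
    (hb : ∏ i, x (n i) = ∑ t ∈ (∏ i, n i).divisors, b t • x t) :
    ∀ t ∈ (∏ i, n i).divisors,
      0 ≤ b t ∧ b t ≤ ∏ i, ((n i).divisors.card : ℤ) := by
  obtain ⟨c, hc, hc0, hcB⟩ := hecke_exists_coeffs R x hx1 hmul r n hn
  set N := ∏ i, n i with hN
  have hzero : ∑ t ∈ N.divisors, (b t - c t) • x t = 0 := by
    simp only [sub_smul, Finset.sum_sub_distrib]
    rw [← hb, ← hc, sub_self]
  have hsub : ∑ u ∈ N.divisors.subtype (fun t => 0 < t), (b u.1 - c u.1) • x u.1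
      = ∑ t ∈ N.divisors, (b t - c t) • x t :=
    Finset.sum_subtype_of_mem (fun t => (b t - c t) • x t)
      (fun t ht => Nat.pos_of_mem_divisors ht)
  have heq : ∀ t ∈ N.divisors, b t = c t := by
    intro t ht
    have := linearIndependent_iff'.mp hindep (N.divisors.subtype (fun t => 0 < t))
      (fun u => b u.1 - c u.1) (by rw [hsub, hzero])
      ⟨t, Nat.pos_of_mem_divisors ht⟩ (Finset.mem_subtype.mpr ht)
    have h2 : b t - c t = 0 := this
    linarith
  intro t ht
  rw [heq t ht]
  exact ⟨hc0 t, hcB t⟩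
end

section
/- The coefficient b_1 of x(1) in products in the Hecke ring satisfies the multiplicative property: if gcd(m_1···m_r, n_1···n_r) = 1, then b_1(m_1 n_1, ..., m_r n_r) = b_1(m_1,...,m_r) · b_1(n_1,...,n_r). -/
/-- The coefficient `b_1` of `x 1` in products in the Hecke ring is multiplicative:
if `gcd(m_1⋯m_r, n_1⋯n_r) = 1` then
`b_1(m_1 n_1, …, m_r n_r) = b_1(m_1,…,m_r) · b_1(n_1,…,n_r)`. -/
theorem hecke_b_one_multiplicative
    (R : Type*) [CommRing R] (x : ℕ → R)
    (hx1 : x 1 = 1)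
    (hmul : ∀ m n : ℕ, 0 < m → 0 < n →
      x m * x n = ∑ d ∈ (Nat.gcd m n).divisors, x (m * n / d ^ 2))
    (hindep : LinearIndependent ℤ (fun t : {t : ℕ // 0 < t} => x t))
    (r : ℕ) (m n : Fin r → ℕ) (hm : ∀ i, 0 < m i) (hn : ∀ i, 0 < n i)
    (hcop : Nat.Coprime (∏ i, m i) (∏ i, n i))
    (b bm bn : ℕ → ℤ)
    (hb : ∏ i, x (m i * n i) = ∑ t ∈ (∏ i, m i * n i).divisors, b t • x t)
    (hbm : ∏ i, x (m i) = ∑ t ∈ (∏ i, m i).divisors, bm t • x t)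
    (hbn : ∏ i, x (n i) = ∑ t ∈ (∏ i, n i).divisors, bn t • x t) :
    b 1 = bm 1 * bn 1 := by
  set M := ∏ i, m i with hM
  set N := ∏ i, n i with hN
  have hMpos : 0 < M := Finset.prod_pos (fun i _ => hm i)
  have hNpos : 0 < N := Finset.prod_pos (fun i _ => hn i)
  -- coprime x-values multiply
  have hxcop : ∀ a c : ℕ, 0 < a → 0 < c → Nat.Coprime a c → x a * x c = x (a * c) := by
    intro a c ha hc hac
    rw [hmul a c ha hc, hac, Nat.divisors_one, Finset.sum_singleton]
    norm_num
  -- step 1: factor each x (m i * n i)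
  have hfac : ∀ i, x (m i * n i) = x (m i) * x (n i) := by
    intro i
    have hci : Nat.Coprime (m i) (n i) :=
      Nat.Coprime.coprime_dvd_right (Finset.dvd_prod_of_mem n (Finset.mem_univ i))
        (Nat.Coprime.coprime_dvd_left (Finset.dvd_prod_of_mem m (Finset.mem_univ i)) hcop)
    exact (hxcop _ _ (hm i) (hn i) hci).symm
  have key : ∑ t ∈ (M * N).divisors, b t • x t
      = ∑ t ∈ M.divisors, ∑ s ∈ N.divisors, (bm t * bn s) • x (t * s) := by
    have hMN : ∏ i, m i * n i = M * N := by rw [hM, hN, Finset.prod_mul_distrib]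
    rw [← hMN, ← hb]
    calc ∏ i, x (m i * n i) = (∏ i, x (m i)) * ∏ i, x (n i) := by
            rw [← Finset.prod_mul_distrib]; exact Finset.prod_congr rfl fun i _ => hfac i
      _ = (∑ t ∈ M.divisors, bm t • x t) * ∑ s ∈ N.divisors, bn s • x s := by rw [hbm, hbn]
      _ = ∑ t ∈ M.divisors, ∑ s ∈ N.divisors, (bm t * bn s) • x (t * s) := by
            rw [Finset.sum_mul_sum]
            refine Finset.sum_congr rfl fun t ht => Finset.sum_congr rfl fun s hs => ?_
            have htd := (Nat.mem_divisors.mp ht).1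
            have hsd := (Nat.mem_divisors.mp hs).1
            have htp : 0 < t := Nat.pos_of_dvd_of_pos htd hMpos
            have hsp : 0 < s := Nat.pos_of_dvd_of_pos hsd hNpos
            have hts : Nat.Coprime t s :=
              Nat.Coprime.coprime_dvd_right hsd (Nat.Coprime.coprime_dvd_left htd hcop)
            rw [smul_mul_smul_comm, hxcop t s htp hsp hts]
  -- build finsupps
  set v : {t : ℕ // 0 < t} → R := fun t => x t with hv
  have posMN : ∀ u ∈ (M * N).divisors, 0 < u := fun u hu =>
    Nat.pos_of_mem_divisors hu
  set F1 : ({t : ℕ // 0 < t} →₀ ℤ) :=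
    ∑ u ∈ (M * N).divisors.attach, Finsupp.single ⟨(u : ℕ), posMN u u.2⟩ (b u) with hF1
  set F2 : ({t : ℕ // 0 < t} →₀ ℤ) :=
    ∑ t ∈ M.divisors.attach, ∑ s ∈ N.divisors.attach,
      Finsupp.single ⟨(t : ℕ) * (s : ℕ),
        Nat.mul_pos (Nat.pos_of_mem_divisors t.2) (Nat.pos_of_mem_divisors s.2)⟩
        (bm t * bn s) with hF2
  have hc1 : Finsupp.linearCombination ℤ v F1 = ∑ t ∈ (M * N).divisors, b t • x t := by
    rw [hF1, map_sum]
    simp only [Finsupp.linearCombination_single]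
    rw [← Finset.sum_attach ((M * N).divisors) (fun t => b t • x t)]
  have hc2 : Finsupp.linearCombination ℤ v F2
      = ∑ t ∈ M.divisors, ∑ s ∈ N.divisors, (bm t * bn s) • x (t * s) := by
    rw [hF2, map_sum]
    rw [← Finset.sum_attach (M.divisors) (fun t => ∑ s ∈ N.divisors, (bm t * bn s) • x (t * s))]
    refine Finset.sum_congr rfl fun t _ => ?_
    rw [map_sum]
    simp only [Finsupp.linearCombination_single]
    rw [← Finset.sum_attach (N.divisors) (fun s => (bm t * bn s) • x (t * s))]
  have hFeq : F1 = F2 := by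
    have := linearIndependent_iff.mp hindep (F1 - F2) (by rw [map_sub, hc1, hc2, key, sub_self])
    exact sub_eq_zero.mp this
  -- evaluate at 1
  have e1 : F1 ⟨1, one_pos⟩ = b 1 := by
    rw [hF1, Finsupp.finset_sum_apply]
    simp only [Finsupp.single_apply, Subtype.mk.injEq]
    rw [Finset.sum_attach ((M * N).divisors) (fun u => if u = 1 then b u else 0)]
    rw [Finset.sum_ite_eq' (M * N).divisors 1 b]
    simp [Nat.one_mem_divisors, Nat.mul_ne_zero hMpos.ne' hNpos.ne']
  have e2 : F2 ⟨1, one_pos⟩ = bm 1 * bn 1 := by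
    rw [hF2, Finsupp.finset_sum_apply]
    simp only [Finsupp.finset_sum_apply, Finsupp.single_apply, Subtype.mk.injEq]
    have hsplit : ∀ t s : ℕ, ((if t * s = 1 then bm t * bn s else 0) : ℤ)
        = if t = 1 then if s = 1 then bm t * bn s else 0 else 0 := by
      intro t s
      by_cases ht : t = 1
      · by_cases hs : s = 1 <;> simp [ht, hs]
      · simp [ht, fun H => ht (Nat.eq_one_of_mul_eq_one_right H)]
    simp only [hsplit]
    rw [Finset.sum_attach (M.divisors)
      (fun t => ∑ s ∈ N.divisors.attach, if t = 1 then if (s : ℕ) = 1 then bm t * bn s else 0 else 0)]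
    have pull : ∀ t : ℕ,
        (∑ s ∈ N.divisors.attach, if t = 1 then if (s : ℕ) = 1 then bm t * bn s else 0 else 0)
        = if t = 1 then ∑ s ∈ N.divisors.attach, if (s : ℕ) = 1 then bm t * bn s else 0 else 0 := by
      intro t; by_cases ht : t = 1 <;> simp [ht]
    simp only [pull]
    rw [Finset.sum_ite_eq' M.divisors 1
      (fun t => ∑ s ∈ N.divisors.attach, if (s : ℕ) = 1 then bm t * bn s else 0)]
    rw [if_pos (Nat.one_mem_divisors.mpr hMpos.ne')]
    rw [Finset.sum_attach (N.divisors) (fun s => if s = 1 then bm 1 * bn s else 0)]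
    rw [Finset.sum_ite_eq' N.divisors 1 (fun s => bm 1 * bn s)]
    simp [Nat.one_mem_divisors, hNpos.ne']
  rw [← e1, ← e2, hFeq]
end

section
/- The function B_r(n) = Σ_{n_1···n_r = n} b_1(n_1,...,n_r) is a multiplicative function of n, and B_r(n) = 0 unless n is a perfect square. -/
open Finset

section HeckeAux
variable {R : Type*} [CommRing R] (x : ℕ → R)

lemma hecke_coeff_zero (hindep : LinearIndependent ℤ (fun t : {t : ℕ // 0 < t} => x t))
    (S : Finset ℕ) (hS : ∀ t ∈ S, 0 < t) (c : ℕ → ℤ)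
    (h : ∑ t ∈ S, c t • x t = 0) : ∀ t ∈ S, c t = 0 := by
  intro t ht
  have h' : ∑ t ∈ S.subtype (fun t => 0 < t), c ↑t • x ↑t = 0 := by
    rw [Finset.sum_subtype_of_mem (fun t => c t • x t) hS]; exact h
  exact linearIndependent_iff'.mp hindep _ (fun t => c ↑t) h' ⟨t, hS t ht⟩
    (Finset.mem_subtype.mpr ht)

lemma hecke_coeff_unique (hindep : LinearIndependent ℤ (fun t : {t : ℕ // 0 < t} => x t))
    (S : Finset ℕ) (hS : ∀ t ∈ S, 0 < t) (c d : ℕ → ℤ)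
    (h : ∑ t ∈ S, c t • x t = ∑ t ∈ S, d t • x t) : ∀ t ∈ S, c t = d t := by
  intro t ht
  exact sub_eq_zero.mp (hecke_coeff_zero x hindep S hS (fun t => c t - d t) (by
    simp only [sub_smul, Finset.sum_sub_distrib, h, sub_self]) t ht)

lemma hecke_expansion (hx1 : x 1 = 1)
    (hmul : ∀ m n : ℕ, 0 < m → 0 < n →
      x m * x n = ∑ d ∈ (Nat.gcd m n).divisors, x (m * n / d ^ 2)) :
    ∀ (r : ℕ) (v : Fin r → ℕ), (∀ i, 0 < v i) →
    ∃ c : ℕ → ℤ,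
      (∏ i, x (v i) = ∑ t ∈ (∏ i, v i).divisors, c t • x t) ∧
      ∀ t ∈ (∏ i, v i).divisors, c t ≠ 0 →
        ∀ p, (t.factorization p + (∏ i, v i).factorization p) % 2 = 0 := by
  intro r
  induction r with
  | zero =>
    intro v hv
    refine ⟨fun _ => 1, ?_, ?_⟩
    · simp [Nat.divisors_one, hx1]
    · intro t ht _ p
      simp only [Finset.univ_eq_empty, Finset.prod_empty, Nat.divisors_one,
        Finset.mem_singleton] at ht ⊢
      subst ht; simp
  | succ n ih =>
    intro v hv
    obtain ⟨c', hc', hpar⟩ := ih (v ∘ Fin.succ) (fun i => hv _)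
    set N' : ℕ := ∏ i, (v ∘ Fin.succ) i with hN'
    have hN'pos : 0 < N' := Finset.prod_pos (fun i _ => hv _)
    have hv0 : 0 < v 0 := hv 0
    have hNsplit : ∏ i, v i = v 0 * N' := by
      rw [Fin.prod_univ_succ]; rfl
    have hNpos : 0 < ∏ i, v i := Finset.prod_pos (fun i _ => hv _)
    set s : Finset ((_ : ℕ) × ℕ) :=
      N'.divisors.sigma (fun t => (Nat.gcd (v 0) t).divisors) with hs
    set f : ((_ : ℕ) × ℕ) → ℕ := fun a => v 0 * a.1 / a.2 ^ 2 with hf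
    have hmem : ∀ a ∈ s, 0 < a.1 ∧ a.2 ∣ v 0 ∧ a.2 ∣ a.1 ∧ a.1 ∣ N' := by
      intro a ha
      rw [hs, Finset.mem_sigma] at ha
      obtain ⟨h1, h2⟩ := ha
      exact ⟨Nat.pos_of_mem_divisors h1,
        (Nat.dvd_gcd_iff.mp (Nat.dvd_of_mem_divisors h2)).1,
        (Nat.dvd_gcd_iff.mp (Nat.dvd_of_mem_divisors h2)).2,
        Nat.dvd_of_mem_divisors h1⟩
    have hsq : ∀ a ∈ s, f a * a.2 ^ 2 = v 0 * a.1 := by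
      intro a ha
      obtain ⟨h1, h2, h3, h4⟩ := hmem a ha
      have : a.2 ^ 2 ∣ v 0 * a.1 := by
        rw [sq]; exact mul_dvd_mul h2 h3
      exact Nat.div_mul_cancel this
    have hmaps : ∀ a ∈ s, f a ∈ (∏ i, v i).divisors := by
      intro a ha
      obtain ⟨h1, h2, h3, h4⟩ := hmem a ha
      rw [Nat.mem_divisors]
      refine ⟨?_, hNpos.ne'⟩
      have h5 : f a ∣ v 0 * a.1 := ⟨a.2 ^ 2, (hsq a ha).symm⟩
      exact h5.trans (hNsplit ▸ mul_dvd_mul_left (v 0) h4)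
    have key : ∏ i, x (v i) = ∑ a ∈ s, c' a.1 • x (f a) := by
      rw [Fin.prod_univ_succ]
      have : ∏ i : Fin n, x (v i.succ) = ∑ t ∈ N'.divisors, c' t • x t := hc'
      rw [this, Finset.mul_sum, hs, Finset.sum_sigma]
      apply Finset.sum_congr rfl
      intro t ht
      have htpos : 0 < t := Nat.pos_of_mem_divisors ht
      rw [mul_smul_comm, hmul (v 0) t hv0 htpos, Finset.smul_sum]
    refine ⟨fun t'' => ∑ a ∈ s.filter (fun a => f a = t''), c' a.1, ?_, ?_⟩
    · rw [key, ← Finset.sum_fiberwise_of_maps_to hmaps (fun a => c' a.1 • x (f a))]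
      apply Finset.sum_congr rfl
      intro t'' _
      rw [Finset.sum_smul]
      apply Finset.sum_congr rfl
      intro a ha
      rw [(Finset.mem_filter.mp ha).2]
    · intro t'' ht'' hne p
      obtain ⟨a, ha, hane⟩ := Finset.exists_ne_zero_of_sum_ne_zero hne
      rw [Finset.mem_filter] at ha
      obtain ⟨has, hafa⟩ := ha
      obtain ⟨h1, h2, h3, h4⟩ := hmem a has
      have ht''pos : 0 < t'' := Nat.pos_of_mem_divisors ht''
      have hd0 : 0 < a.2 := Nat.pos_of_dvd_of_pos h2 hv0
      have heq : t'' * a.2 ^ 2 = v 0 * a.1 := hafa ▸ hsq a has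
      have hfac : t''.factorization p + 2 * a.2.factorization p
          = (v 0).factorization p + a.1.factorization p := by
        have h := congrArg (fun m : ℕ => m.factorization p) heq
        simpa [Nat.factorization_mul ht''pos.ne' (pow_ne_zero 2 hd0.ne'),
          Nat.factorization_mul hv0.ne' h1.ne', Nat.factorization_pow,
          Finsupp.add_apply, Finsupp.smul_apply, smul_eq_mul] using h
      have hNfac : (∏ i, v i).factorization p
          = (v 0).factorization p + N'.factorization p := by
        rw [hNsplit, Nat.factorization_mul hv0.ne' hN'pos.ne']
        simp
      have hparity := hpar a.1 (Nat.mem_divisors.mpr ⟨h4, hN'pos.ne'⟩) hane p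
      omega

end HeckeAux

/-- The function `B_r(n) = ∑_{n_1⋯n_r = n} b_1(n_1,…,n_r)` is multiplicative in `n`,
and `B_r(n) = 0` unless `n` is a perfect square. -/
theorem hecke_B_r_multiplicative_and_supported_on_squares
    (R : Type*) [CommRing R] (x : ℕ → R)
    (hx1 : x 1 = 1)
    (hmul : ∀ m n : ℕ, 0 < m → 0 < n →
      x m * x n = ∑ d ∈ (Nat.gcd m n).divisors, x (m * n / d ^ 2))
    (hindep : LinearIndependent ℤ (fun t : {t : ℕ // 0 < t} => x t))
    (r : ℕ) (hr : 1 ≤ r)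
    (b : (Fin r → ℕ) → ℕ → ℤ)
    (hb : ∀ v : Fin r → ℕ, (∀ i, 0 < v i) →
      ∏ i, x (v i) = ∑ t ∈ (∏ i, v i).divisors, b v t • x t)
    (B : ℕ → ℤ)
    (hB : ∀ n : ℕ, 0 < n →
      B n = ∑ v ∈ (Fintype.piFinset fun _ : Fin r => Finset.Icc 1 n).filter
        (fun v => ∏ i, v i = n), b v 1) :
    B 1 = 1 ∧
    (∀ a c : ℕ, 0 < a → 0 < c → Nat.Coprime a c → B (a * c) = B a * B c) ∧
    (∀ n : ℕ, 0 < n → ¬ IsSquare n → B n = 0) := by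
  -- coefficient extraction: any expansion over divisors equals b
  have hbval : ∀ (v : Fin r → ℕ), (∀ i, 0 < v i) → ∀ (c : ℕ → ℤ),
      (∏ i, x (v i) = ∑ t ∈ (∏ i, v i).divisors, c t • x t) →
      ∀ t ∈ (∏ i, v i).divisors, b v t = c t := by
    intro v hv c hc t ht
    exact hecke_coeff_unique x hindep _ (fun t ht => Nat.pos_of_mem_divisors ht)
      (b v) c ((hb v hv).symm.trans hc) t ht
  have hxcop : ∀ s t : ℕ, 0 < s → 0 < t → Nat.Coprime s t → x (s * t) = x s * x t := by
    intro s t hs ht hst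
    rw [hmul s t hs ht, hst]
    simp [Nat.divisors_one]
  -- B 1 = 1
  have hB1 : B 1 = 1 := by
    rw [hB 1 one_pos]
    have hset : (Fintype.piFinset fun _ : Fin r => Finset.Icc 1 1).filter
        (fun v => ∏ i, v i = 1) = {fun _ => 1} := by
      ext v
      simp only [Finset.mem_filter, Fintype.mem_piFinset, Finset.mem_Icc,
        Finset.mem_singleton]
      constructor
      · rintro ⟨h1, h2⟩
        funext i
        have := h1 i; omega
      · rintro rfl
        simp
    rw [hset, Finset.sum_singleton]
    have := hbval (fun _ => 1) (fun _ => one_pos) (fun _ => 1) ?_ 1 ?_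
    · rw [this]
    · simp [hx1, Nat.divisors_one]
    · simp [Nat.divisors_one]
  refine ⟨hB1, ?_, ?_⟩
  · -- multiplicativity
    -- core: b (u*w) 1 = b u 1 * b w 1
    have hbmul : ∀ (a c : ℕ), 0 < a → 0 < c → Nat.Coprime a c →
        ∀ u w : Fin r → ℕ, (∀ i, 0 < u i) → (∀ i, 0 < w i) →
        (∏ i, u i) = a → (∏ i, w i) = c →
        b (fun i => u i * w i) 1 = b u 1 * b w 1 := by
      intro a c hapos hcpos hac u w hu hw hua hwc
      have hvpos : ∀ i, 0 < u i * w i := fun i => Nat.mul_pos (hu i) (hw i)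
      have hudvd : ∀ i, u i ∣ a := fun i => hua ▸ Finset.dvd_prod_of_mem u (Finset.mem_univ i)
      have hwdvd : ∀ i, w i ∣ c := fun i => hwc ▸ Finset.dvd_prod_of_mem w (Finset.mem_univ i)
      have hprod : (∏ i, u i * w i) = a * c := by
        rw [Finset.prod_mul_distrib, hua, hwc]
      set f : ℕ × ℕ → ℕ := fun st => st.1 * st.2 with hfdef
      have hmapsto : ∀ st ∈ a.divisors ×ˢ c.divisors, f st ∈ (a * c).divisors := by
        intro st hst
        rw [Finset.mem_product] at hst
        exact Nat.mem_divisors.mpr ⟨mul_dvd_mul (Nat.dvd_of_mem_divisors hst.1)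
          (Nat.dvd_of_mem_divisors hst.2), (Nat.mul_pos hapos hcpos).ne'⟩
      have expand : ∏ i, x (u i * w i)
          = ∑ st ∈ a.divisors ×ˢ c.divisors, (b u st.1 * b w st.2) • x (f st) := by
        have e1 : ∏ i, x (u i * w i) = (∏ i, x (u i)) * (∏ i, x (w i)) := by
          rw [← Finset.prod_mul_distrib]
          exact Finset.prod_congr rfl fun i _ => hxcop _ _ (hu i) (hw i)
            (Nat.Coprime.coprime_dvd_left (hudvd i)
              (Nat.Coprime.coprime_dvd_right (hwdvd i) hac))
        rw [e1, hb u hu, hb w hw, hua, hwc, Finset.sum_mul_sum, ← Finset.sum_product']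
        apply Finset.sum_congr rfl
        intro st hst
        rw [Finset.mem_product] at hst
        have hs : 0 < st.1 := Nat.pos_of_mem_divisors hst.1
        have ht : 0 < st.2 := Nat.pos_of_mem_divisors hst.2
        have hstcop : Nat.Coprime st.1 st.2 :=
          Nat.Coprime.coprime_dvd_left (Nat.dvd_of_mem_divisors hst.1)
            (Nat.Coprime.coprime_dvd_right (Nat.dvd_of_mem_divisors hst.2) hac)
        rw [hfdef]
        simp only [zsmul_eq_mul, Int.cast_mul]
        rw [hxcop _ _ hs ht hstcop]
        ring
      have expand2 : ∏ i, x (u i * w i) = ∑ t'' ∈ (a * c).divisors,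
          (∑ st ∈ (a.divisors ×ˢ c.divisors).filter (fun st => f st = t''),
            b u st.1 * b w st.2) • x t'' := by
        rw [expand,
          ← Finset.sum_fiberwise_of_maps_to hmapsto (fun st => (b u st.1 * b w st.2) • x (f st))]
        apply Finset.sum_congr rfl
        intro t'' _
        rw [Finset.sum_smul]
        apply Finset.sum_congr rfl
        intro st hst
        rw [(Finset.mem_filter.mp hst).2]
      have hb1 := hbval (fun i => u i * w i) hvpos _ (hprod ▸ expand2) 1
        (hprod ▸ Nat.one_mem_divisors.mpr (Nat.mul_pos hapos hcpos).ne')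
      rw [hb1]
      have hfilter : (a.divisors ×ˢ c.divisors).filter (fun st => f st = 1) = {(1, 1)} := by
        ext st
        simp only [Finset.mem_filter, Finset.mem_product, Finset.mem_singleton, hfdef]
        constructor
        · rintro ⟨_, h2⟩
          exact Prod.ext (Nat.eq_one_of_mul_eq_one_right h2)
            (Nat.eq_one_of_mul_eq_one_left h2)
        · rintro rfl
          exact ⟨⟨Nat.one_mem_divisors.mpr hapos.ne', Nat.one_mem_divisors.mpr hcpos.ne'⟩, rfl⟩
      rw [hfilter, Finset.sum_singleton]
    -- now the bijection between tuples
    intro a c hapos hcpos hac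
    rw [hB (a * c) (Nat.mul_pos hapos hcpos), hB a hapos, hB c hcpos,
      Finset.sum_mul_sum, ← Finset.sum_product']
    apply Finset.sum_nbij' (i := fun v => (fun k => (v k).gcd a, fun k => (v k).gcd c))
      (j := fun p => fun k => p.1 k * p.2 k)
    · -- i maps to target
      intro v hvmem
      rw [Finset.mem_filter, Fintype.mem_piFinset] at hvmem
      obtain ⟨hv1, hv2⟩ := hvmem
      have hvpos : ∀ k, 0 < v k := fun k => (Finset.mem_Icc.mp (hv1 k)).1
      have hvd : ∀ k, v k ∣ a * c := fun k =>
        hv2 ▸ Finset.dvd_prod_of_mem v (Finset.mem_univ k)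
      have hgcdsplit : ∀ k, (v k).gcd a * (v k).gcd c = v k := fun k =>
        (Nat.gcd_mul_gcd_eq_iff_dvd_mul_of_coprime hac).mpr (hvd k)
      set U := ∏ k, (v k).gcd a with hUdef
      set W := ∏ k, (v k).gcd c with hWdef
      have hUW : U * W = a * c := by
        rw [hUdef, hWdef, ← Finset.prod_mul_distrib, ← hv2]
        exact Finset.prod_congr rfl fun k _ => hgcdsplit k
      have hUcop : Nat.Coprime U c :=
        Nat.coprime_prod_left_iff.mpr fun k _ =>
          Nat.Coprime.coprime_dvd_left (Nat.gcd_dvd_right _ _) hac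
      have hWcop : Nat.Coprime a W :=
        Nat.coprime_prod_right_iff.mpr fun k _ =>
          Nat.Coprime.coprime_dvd_right (Nat.gcd_dvd_right _ _) hac
      have hUa : U ∣ a :=
        (Nat.Coprime.dvd_of_dvd_mul_right hUcop) ⟨W, hUW.symm⟩
      have hWc : W ∣ c := by
        apply Nat.Coprime.dvd_of_dvd_mul_left hWcop.symm
        exact ⟨U, by rw [← hUW]; ring⟩
      obtain ⟨s, hs⟩ := hUa
      obtain ⟨t, ht⟩ := hWc
      have hUpos : 0 < U :=
        Finset.prod_pos fun k _ => Nat.gcd_pos_of_pos_right _ hapos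
      have hWpos : 0 < W :=
        Finset.prod_pos fun k _ => Nat.gcd_pos_of_pos_right _ hcpos
      have h1 : U * W * (s * t) = a * c := by
        conv_rhs => rw [hs, ht]
        ring
      have hst : s * t = 1 := by
        apply Nat.eq_of_mul_eq_mul_left (Nat.mul_pos hUpos hWpos)
        rw [h1, mul_one, hUW]
      have hs1 : s = 1 := Nat.eq_one_of_mul_eq_one_right hst
      have ht1 : t = 1 := Nat.eq_one_of_mul_eq_one_left hst
      subst hs1; subst ht1
      rw [mul_one] at hs ht
      rw [Finset.mem_product]
      constructor
      · rw [Finset.mem_filter, Fintype.mem_piFinset]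
        refine ⟨fun k => Finset.mem_Icc.mpr
          ⟨Nat.gcd_pos_of_pos_right _ hapos, Nat.le_of_dvd hapos (Nat.gcd_dvd_right _ _)⟩, hs.symm⟩
      · rw [Finset.mem_filter, Fintype.mem_piFinset]
        refine ⟨fun k => Finset.mem_Icc.mpr
          ⟨Nat.gcd_pos_of_pos_right _ hcpos, Nat.le_of_dvd hcpos (Nat.gcd_dvd_right _ _)⟩, ht.symm⟩
    · -- j maps to source
      intro p hp
      rw [Finset.mem_product] at hp
      obtain ⟨hp1, hp2⟩ := hp
      rw [Finset.mem_filter, Fintype.mem_piFinset] at hp1 hp2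
      obtain ⟨hp1m, hp1p⟩ := hp1
      obtain ⟨hp2m, hp2p⟩ := hp2
      rw [Finset.mem_filter, Fintype.mem_piFinset]
      constructor
      · intro k
        have h1 := Finset.mem_Icc.mp (hp1m k)
        have h2 := Finset.mem_Icc.mp (hp2m k)
        exact Finset.mem_Icc.mpr ⟨Nat.one_le_iff_ne_zero.mpr
          (Nat.mul_ne_zero (by omega) (by omega)), Nat.mul_le_mul h1.2 h2.2⟩
      · rw [Finset.prod_mul_distrib, hp1p, hp2p]
    · -- left inverse
      intro v hvmem
      rw [Finset.mem_filter, Fintype.mem_piFinset] at hvmem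
      obtain ⟨hv1, hv2⟩ := hvmem
      have hvd : ∀ k, v k ∣ a * c := fun k =>
        hv2 ▸ Finset.dvd_prod_of_mem v (Finset.mem_univ k)
      funext k
      exact (Nat.gcd_mul_gcd_eq_iff_dvd_mul_of_coprime hac).mpr (hvd k)
    · -- right inverse
      intro p hp
      rw [Finset.mem_product] at hp
      obtain ⟨hp1, hp2⟩ := hp
      rw [Finset.mem_filter, Fintype.mem_piFinset] at hp1 hp2
      obtain ⟨hp1m, hp1p⟩ := hp1
      obtain ⟨hp2m, hp2p⟩ := hp2
      have hud : ∀ k, p.1 k ∣ a := fun k =>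
        hp1p ▸ Finset.dvd_prod_of_mem p.1 (Finset.mem_univ k)
      have hwd : ∀ k, p.2 k ∣ c := fun k =>
        hp2p ▸ Finset.dvd_prod_of_mem p.2 (Finset.mem_univ k)
      have e1 : ∀ k, (p.1 k * p.2 k).gcd a = p.1 k := by
        intro k
        have hcw : Nat.Coprime (p.2 k) a :=
          Nat.Coprime.coprime_dvd_left (hwd k) hac.symm
        rw [Nat.Coprime.gcd_mul_right_cancel _ hcw]
        exact Nat.gcd_eq_left (hud k)
      have e2 : ∀ k, (p.1 k * p.2 k).gcd c = p.2 k := by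
        intro k
        have hcu : Nat.Coprime (p.1 k) c :=
          Nat.Coprime.coprime_dvd_left (hud k) hac
        rw [mul_comm, Nat.Coprime.gcd_mul_right_cancel _ hcu]
        exact Nat.gcd_eq_left (hwd k)
      exact Prod.ext (funext fun k => e1 k) (funext fun k => e2 k)
    · -- values agree
      intro v hvmem
      rw [Finset.mem_filter, Fintype.mem_piFinset] at hvmem
      obtain ⟨hv1, hv2⟩ := hvmem
      have hvd : ∀ k, v k ∣ a * c := fun k =>
        hv2 ▸ Finset.dvd_prod_of_mem v (Finset.mem_univ k)
      have hgcdsplit : ∀ k, (v k).gcd a * (v k).gcd c = v k := fun k =>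
        (Nat.gcd_mul_gcd_eq_iff_dvd_mul_of_coprime hac).mpr (hvd k)
      set U := ∏ k, (v k).gcd a with hUdef
      set W := ∏ k, (v k).gcd c with hWdef
      have hUW : U * W = a * c := by
        rw [hUdef, hWdef, ← Finset.prod_mul_distrib, ← hv2]
        exact Finset.prod_congr rfl fun k _ => hgcdsplit k
      have hUcop : Nat.Coprime U c :=
        Nat.coprime_prod_left_iff.mpr fun k _ =>
          Nat.Coprime.coprime_dvd_left (Nat.gcd_dvd_right _ _) hac
      have hWcop : Nat.Coprime a W :=
        Nat.coprime_prod_right_iff.mpr fun k _ =>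
          Nat.Coprime.coprime_dvd_right (Nat.gcd_dvd_right _ _) hac
      have hUa : U ∣ a :=
        (Nat.Coprime.dvd_of_dvd_mul_right hUcop) ⟨W, hUW.symm⟩
      have hWc : W ∣ c := by
        apply Nat.Coprime.dvd_of_dvd_mul_left hWcop.symm
        exact ⟨U, by rw [← hUW]; ring⟩
      obtain ⟨s, hs⟩ := hUa
      obtain ⟨t, ht⟩ := hWc
      have hUpos : 0 < U :=
        Finset.prod_pos fun k _ => Nat.gcd_pos_of_pos_right _ hapos
      have hWpos : 0 < W :=
        Finset.prod_pos fun k _ => Nat.gcd_pos_of_pos_right _ hcpos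
      have h1 : U * W * (s * t) = a * c := by
        conv_rhs => rw [hs, ht]
        ring
      have hst : s * t = 1 := by
        apply Nat.eq_of_mul_eq_mul_left (Nat.mul_pos hUpos hWpos)
        rw [h1, mul_one, hUW]
      have hs1 : s = 1 := Nat.eq_one_of_mul_eq_one_right hst
      have ht1 : t = 1 := Nat.eq_one_of_mul_eq_one_left hst
      subst hs1; subst ht1
      rw [mul_one] at hs ht
      have := hbmul a c hapos hcpos hac (fun k => (v k).gcd a) (fun k => (v k).gcd c)
        (fun k => Nat.gcd_pos_of_pos_right _ hapos)
        (fun k => Nat.gcd_pos_of_pos_right _ hcpos) hs.symm ht.symm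
      rw [← this]
      congr 1
      funext k
      exact (hgcdsplit k).symm
  · -- vanishing on non-squares
    intro n hn hnsq
    rw [hB n hn]
    apply Finset.sum_eq_zero
    intro v hv
    rw [Finset.mem_filter] at hv
    obtain ⟨hv1, hv2⟩ := hv
    rw [Fintype.mem_piFinset] at hv1
    have hvpos : ∀ i, 0 < v i := fun i => (Finset.mem_Icc.mp (hv1 i)).1
    by_contra hne
    obtain ⟨c, hc, hcpar⟩ := hecke_expansion x hx1 hmul r v hvpos
    have hb1 : b v 1 = c 1 := hbval v hvpos c hc 1
      (Nat.one_mem_divisors.mpr (hv2 ▸ hn.ne'))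
    have hc1 : c 1 ≠ 0 := hb1 ▸ hne
    have heven := hcpar 1 (Nat.one_mem_divisors.mpr (by rw [hv2]; exact hn.ne')) hc1
    apply hnsq
    set m := n.factorization.prod fun p k => p ^ (k / 2) with hm
    refine ⟨m, ?_⟩
    conv_lhs => rw [← Nat.factorization_prod_pow_eq_self hn.ne']
    rw [hm, Finsupp.prod, Finsupp.prod, ← Finset.prod_mul_distrib]
    apply Finset.prod_congr rfl
    intro p hp
    rw [← pow_add]
    congr 1
    have h2 := heven p
    rw [hv2] at h2
    simp only [Nat.factorization_one, Finsupp.coe_zero, Pi.zero_apply, zero_add] at h2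
    omega
end

section
/- Define W_k(ξ) = (1/2πi) ∫_{(c)} ((2π)^{-s} Γ(s + k/2)/Γ(k/2)) ξ^{-s} ds/s for c > 0 and ξ > 0. Then |W_k(ξ)| ≤ (k/(πξ))^k for all ξ > 0, and in particular |W_k(ξ)| ≤ (k/ξ) π^{-(k-1)} for ξ ≥ k. -/
/-!
Writing `Γ(a, y) = ∫_y^∞ e^{-u} u^{a-1} du` and `a = k/2`, the weight has the closed form
`W_k(ξ) = Γ(a, 2πξ) / Γ(a)`. Indeed, by Fubini the Mellin transform of a tail `x ↦ ∫_x^∞ g`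
is `𝓜 g (s + 1) / s`, so `x ↦ Γ(a, 2πx)` has Mellin transform `(2π)^{-s} Γ(s + a) / s`; this is
integrable on vertical lines because `|Γ(σ + it)| ≤ Γ(σ + 2) / (σ² + t²)`, and Mellin inversion
applies. Markov's inequality `y^k Γ(a, y) ≤ Γ(a + k) ≤ Γ(a) (a + k)^k` with `a + k ≤ 2k` then gives
`|W_k(ξ)| ≤ (2k / 2πξ)^k`.
-/

open Complex

/-- The weight `W_k(ξ) = (1/2πi) ∫_{(c)} ((2π)^{-s} Γ(s+k/2)/Γ(k/2)) ξ^{-s} ds/s`,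
written as an integral over the vertical line `Re s = c` parametrized by `s = c + it`. -/
noncomputable def heckeWeight (k : ℕ) (c : ℝ) (ξ : ℝ) : ℂ :=
  (1 / (2 * Real.pi)) * ∫ t : ℝ,
    ((2 * Real.pi : ℂ) ^ (-(c + t * I)) * Complex.Gamma ((c + t * I) + k / 2) /
        Complex.Gamma ((k : ℂ) / 2)) * (ξ : ℂ) ^ (-(c + t * I)) / (c + t * I)

open scoped Real
open MeasureTheory Set Function

theorem integral_Ioo_zero_cpow_sub_one {s : ℂ} (hs : 0 < s.re) {u : ℝ} (hu : 0 ≤ u) :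
    ∫ x in Ioo 0 u, (x : ℂ) ^ (s - 1) = (u : ℂ) ^ s / s := by
  have hs0 : s ≠ 0 := by rintro rfl; simp at hs
  rw [← integral_Ioc_eq_integral_Ioo, ← intervalIntegral.integral_of_le hu,
    integral_cpow (Or.inl (by simpa using hs)), sub_add_cancel, ofReal_zero, zero_cpow hs0,
    sub_zero]

theorem integral_Ioo_zero_rpow_sub_one {σ : ℝ} (hσ : 0 < σ) {u : ℝ} (hu : 0 ≤ u) :
    ∫ x in Ioo 0 u, x ^ (σ - 1) = u ^ σ / σ := by
  rw [← integral_Ioc_eq_integral_Ioo, ← intervalIntegral.integral_of_le hu,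
    integral_rpow (Or.inl (by linarith)), sub_add_cancel, Real.zero_rpow hσ.ne', sub_zero]

theorem MellinConvergent.aestronglyMeasurable {E : Type*} [NormedAddCommGroup E]
    [NormedSpace ℂ E] {g : ℝ → E} {s : ℂ} (hg : MellinConvergent g s) :
    AEStronglyMeasurable g (volume.restrict (Ioi 0)) := by
  have : AEStronglyMeasurable (fun u : ℝ => (u : ℂ) ^ (1 - s) • ((u : ℂ) ^ (s - 1) • g u))
      (volume.restrict (Ioi 0)) :=
    (Measurable.aestronglyMeasurable (by fun_prop)).smul (Integrable.aestronglyMeasurable hg)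
  refine this.congr ?_
  filter_upwards [ae_restrict_mem measurableSet_Ioi] with u hu
  rw [smul_smul, ← cpow_add _ _ (ofReal_ne_zero.2 (ne_of_gt hu))]
  simp

section MellinTail

variable {E : Type*} [NormedAddCommGroup E] [NormedSpace ℂ E] {g : ℝ → E} {s : ℂ}

noncomputable def mellinTailKernel (g : ℝ → E) (s : ℂ) (x u : ℝ) : E :=
  if x < u then (x : ℂ) ^ (s - 1) • g u else 0

theorem integral_mellinTailKernel_right {x : ℝ} (hx : 0 < x) :
    ∫ u in Ioi 0, mellinTailKernel g s x u = (x : ℂ) ^ (s - 1) • ∫ u in Ioi x, g u := by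
  have hindicator :
      mellinTailKernel g s x = (Ioi x).indicator fun u => (x : ℂ) ^ (s - 1) • g u := by
    ext u; simp [mellinTailKernel, indicator_apply]
  rw [hindicator, integral_indicator measurableSet_Ioi, Measure.restrict_restrict measurableSet_Ioi,
    Ioi_inter_Ioi, max_eq_left hx.le, integral_smul]

theorem mellinTailKernel_eq_indicator_Iio (u : ℝ) :
    (fun x => mellinTailKernel g s x u) = (Iio u).indicator fun x => (x : ℂ) ^ (s - 1) • g u := by
  ext x; simp [mellinTailKernel, indicator_apply]

theorem integrable_mellinTailKernel_left {u : ℝ} (hs : 0 < s.re) (hu : 0 < u) :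
    Integrable (fun x => mellinTailKernel g s x u) (volume.restrict (Ioi 0)) := by
  have hcpow : IntegrableOn (fun x : ℝ => (x : ℂ) ^ (s - 1)) (Ioo 0 u) :=
    ((intervalIntegrable_iff_integrableOn_Ioc_of_le hu.le).1
      (intervalIntegral.intervalIntegrable_cpow' (by simpa using hs))).mono_set Ioo_subset_Ioc_self
  rw [mellinTailKernel_eq_indicator_Iio, integrable_indicator_iff measurableSet_Iio, IntegrableOn,
    Measure.restrict_restrict measurableSet_Iio, Iio_inter_Ioi]
  exact hcpow.smul_const (g u)

theorem integral_mellinTailKernel_left [CompleteSpace E] {u : ℝ} (hs : 0 < s.re) (hu : 0 < u) :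
    ∫ x in Ioi 0, mellinTailKernel g s x u = ((u : ℂ) ^ s / s) • g u := by
  rw [mellinTailKernel_eq_indicator_Iio, integral_indicator measurableSet_Iio,
    Measure.restrict_restrict measurableSet_Iio, Iio_inter_Ioi, integral_smul_const,
    integral_Ioo_zero_cpow_sub_one hs hu.le]

theorem integral_norm_mellinTailKernel_left {u : ℝ} (hs : 0 < s.re) (hu : 0 < u) :
    ∫ x in Ioi 0, ‖mellinTailKernel g s x u‖ = ‖(u : ℂ) ^ s • g u‖ / s.re := by
  have hnorm : EqOn (fun x => ‖mellinTailKernel g s x u‖)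
      ((Iio u).indicator fun x => x ^ (s.re - 1) * ‖g u‖) (Ioi 0) := by
    intro x hx
    by_cases hxu : x < u
    · simp [mellinTailKernel, hxu, norm_smul, norm_cpow_eq_rpow_re_of_pos hx]
    · simp [mellinTailKernel, hxu]
  rw [setIntegral_congr_fun measurableSet_Ioi hnorm, integral_indicator measurableSet_Iio,
    Measure.restrict_restrict measurableSet_Iio, Iio_inter_Ioi, integral_mul_const,
    integral_Ioo_zero_rpow_sub_one hs hu.le, norm_smul, norm_cpow_eq_rpow_re_of_pos hu]
  ring

theorem integrable_mellinTailKernel (hs : 0 < s.re) (hg : MellinConvergent g (s + 1)) :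
    Integrable (uncurry (mellinTailKernel g s))
      ((volume.restrict (Ioi 0)).prod (volume.restrict (Ioi 0))) := by
  have hmeas : AEStronglyMeasurable (uncurry (mellinTailKernel g s))
      ((volume.restrict (Ioi 0)).prod (volume.restrict (Ioi 0))) := by
    have hprod : AEStronglyMeasurable (fun p : ℝ × ℝ => (p.1 : ℂ) ^ (s - 1) • g p.2)
        ((volume.restrict (Ioi 0)).prod (volume.restrict (Ioi 0))) :=
      (Measurable.aestronglyMeasurable (by fun_prop)).smul hg.aestronglyMeasurable.comp_snd
    have hindicator : uncurry (mellinTailKernel g s) =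
        {p : ℝ × ℝ | p.1 < p.2}.indicator fun p => (p.1 : ℂ) ^ (s - 1) • g p.2 := by
      ext ⟨x, u⟩; simp [mellinTailKernel, indicator_apply]
    rw [hindicator]
    exact hprod.indicator (measurableSet_lt measurable_fst measurable_snd)
  refine (integrable_prod_iff' hmeas).2 ⟨?_, ?_⟩
  · filter_upwards [ae_restrict_mem measurableSet_Ioi] with u hu
    exact integrable_mellinTailKernel_left hs hu
  · have hdom : Integrable (fun u : ℝ => ‖(u : ℂ) ^ s • g u‖ / s.re) (volume.restrict (Ioi 0)) := by
      simpa using hg.norm.div_const s.re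
    refine hdom.congr ?_
    filter_upwards [ae_restrict_mem measurableSet_Ioi] with u hu
    exact (integral_norm_mellinTailKernel_left hs hu).symm

theorem hasMellin_integral_Ioi [CompleteSpace E] (hs : 0 < s.re)
    (hg : MellinConvergent g (s + 1)) :
    HasMellin (fun x => ∫ u in Ioi x, g u) s (s⁻¹ • mellin g (s + 1)) := by
  have hsection : EqOn (fun x => ∫ u in Ioi 0, mellinTailKernel g s x u)
      (fun x => (x : ℂ) ^ (s - 1) • ∫ u in Ioi x, g u) (Ioi 0) :=
    fun x hx => integral_mellinTailKernel_right hx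
  refine ⟨IntegrableOn.congr_fun (integrable_mellinTailKernel hs hg).integral_prod_left hsection
    measurableSet_Ioi, ?_⟩
  calc mellin (fun x => ∫ u in Ioi x, g u) s
      = ∫ x in Ioi 0, ∫ u in Ioi 0, mellinTailKernel g s x u :=
        (setIntegral_congr_fun measurableSet_Ioi hsection).symm
    _ = ∫ u in Ioi 0, ∫ x in Ioi 0, mellinTailKernel g s x u :=
        integral_integral_swap (integrable_mellinTailKernel hs hg)
    _ = ∫ u : ℝ in Ioi 0, s⁻¹ • ((u : ℂ) ^ (s + 1 - 1) • g u) := by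
        refine setIntegral_congr_fun measurableSet_Ioi fun u hu => ?_
        rw [integral_mellinTailKernel_left hs hu, add_sub_cancel_right, smul_smul, div_eq_inv_mul]
    _ = s⁻¹ • mellin g (s + 1) := integral_smul _ _

end MellinTail

theorem Complex.norm_Gamma_le_Gamma_re {s : ℂ} (hs : 0 < s.re) :
    ‖Complex.Gamma s‖ ≤ Real.Gamma s.re := by
  rw [Complex.Gamma_eq_integral hs, Real.Gamma_eq_integral hs, Complex.GammaIntegral]
  refine (norm_integral_le_integral_norm _).trans_eq (setIntegral_congr_fun measurableSet_Ioi
    fun x hx => ?_)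
  rw [norm_mul, norm_real, Real.norm_of_nonneg (Real.exp_pos _).le,
    norm_cpow_eq_rpow_re_of_pos hx, sub_re, one_re]

theorem Complex.norm_Gamma_mul_norm_sq_le {s : ℂ} (hs : 0 < s.re) :
    ‖Complex.Gamma s‖ * ‖s‖ ^ 2 ≤ Real.Gamma (s.re + 2) := by
  have hs0 : s ≠ 0 := by rintro rfl; simp at hs
  have hs1 : s + 1 ≠ 0 := by
    intro h; have := congrArg re h; simp at this; linarith
  have hnorm : ‖s‖ ≤ ‖s + 1‖ := by
    rw [← sq_le_sq₀ (norm_nonneg _) (norm_nonneg _), Complex.sq_norm, Complex.sq_norm, normSq_apply,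
      normSq_apply]
    simp only [add_re, one_re, add_im, one_im, add_zero]
    nlinarith
  calc ‖Complex.Gamma s‖ * ‖s‖ ^ 2 = ‖s‖ * ‖s‖ * ‖Complex.Gamma s‖ := by ring
    _ ≤ ‖s + 1‖ * ‖s‖ * ‖Complex.Gamma s‖ := by gcongr
    _ = ‖Complex.Gamma (s + 2)‖ := by
        rw [show s + 2 = s + 1 + 1 by ring, Complex.Gamma_add_one _ hs1,
          Complex.Gamma_add_one _ hs0, norm_mul, norm_mul, mul_assoc]
    _ ≤ Real.Gamma (s.re + 2) := by
        simpa using Complex.norm_Gamma_le_Gamma_re (s := s + 2) (by simp; linarith)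

theorem Complex.integrable_Gamma_ofReal_add_mul_I {σ : ℝ} (hσ : 0 < σ) :
    Integrable fun t : ℝ => Complex.Gamma (σ + t * I) := by
  have hcont : Continuous fun t : ℝ => Complex.Gamma (σ + t * I) := by
    refine continuous_iff_continuousAt.2 fun t => (Complex.continuousAt_Gamma _ fun m h => ?_).comp
      (by fun_prop)
    have := congrArg re h
    simp at this
    linarith [(Nat.cast_nonneg m : (0 : ℝ) ≤ m)]
  have hdom : Integrable fun t : ℝ => Real.Gamma (σ + 2) * (σ ^ 2)⁻¹ * (1 + (t / σ) ^ 2)⁻¹ :=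
    (integrable_inv_one_add_sq.comp_div hσ.ne').const_mul _
  refine hdom.mono' hcont.aestronglyMeasurable (ae_of_all _ fun t => ?_)
  have hsq : ‖(σ : ℂ) + t * I‖ ^ 2 = σ ^ 2 * (1 + (t / σ) ^ 2) := by
    rw [Complex.sq_norm, normSq_add_mul_I]; field_simp
  have hre : ((σ : ℂ) + t * I).re = σ := by simp
  have := Complex.norm_Gamma_mul_norm_sq_le (s := σ + t * I) (by rwa [hre])
  rw [hsq, hre] at this
  rw [mul_assoc, ← mul_inv, ← div_eq_mul_inv, le_div_iff₀ (by positivity)]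
  exact this

theorem Real.Gamma_add_nat_le {x : ℝ} (hx : 0 < x) (n : ℕ) :
    Real.Gamma (x + n) ≤ Real.Gamma x * (x + n) ^ n := by
  induction n with
  | zero => simp
  | succ n ih =>
    have hxn : 0 < x + n := by positivity
    have hΓ := Real.Gamma_pos_of_pos hx
    push_cast
    calc Real.Gamma (x + (n + 1)) = (x + n) * Real.Gamma (x + n) := by
          rw [← add_assoc, Real.Gamma_add_one hxn.ne']
      _ ≤ (x + (n + 1)) * (Real.Gamma x * (x + (n + 1)) ^ n) := by
          gcongr
          · linarith
          · exact ih.trans (by gcongr; linarith)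
      _ = Real.Gamma x * (x + (n + 1)) ^ (n + 1) := by ring

noncomputable def upperIncompleteGamma (a y : ℝ) : ℝ :=
  ∫ u in Ioi y, Real.exp (-u) * u ^ (a - 1)

section UpperIncompleteGamma

variable {a : ℝ}

theorem upperIncompleteGamma_nonneg (a : ℝ) {y : ℝ} (hy : 0 ≤ y) :
    0 ≤ upperIncompleteGamma a y :=
  setIntegral_nonneg measurableSet_Ioi fun u hu => by
    have : 0 ≤ u := hy.trans (le_of_lt hu)
    positivity

theorem upperIncompleteGamma_mul_rpow_le (ha : 0 < a) {y p : ℝ} (hy : 0 ≤ y) (hp : 0 ≤ p) :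
    upperIncompleteGamma a y * y ^ p ≤ Real.Gamma (a + p) := by
  have hint : ∀ b : ℝ, 0 < b → IntegrableOn (fun u => Real.exp (-u) * u ^ (b - 1)) (Ioi y) :=
    fun b hb => (Real.GammaIntegral_convergent hb).mono_set (Ioi_subset_Ioi hy)
  calc upperIncompleteGamma a y * y ^ p
      = ∫ u in Ioi y, y ^ p * (Real.exp (-u) * u ^ (a - 1)) := by
        rw [upperIncompleteGamma, integral_const_mul, mul_comm]
    _ ≤ ∫ u in Ioi y, Real.exp (-u) * u ^ (a + p - 1) := by
        refine setIntegral_mono_on ((hint a ha).const_mul _) (hint _ (by linarith))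
          measurableSet_Ioi fun u hu => ?_
        have hu0 : 0 < u := hy.trans_lt hu
        calc y ^ p * (Real.exp (-u) * u ^ (a - 1))
            ≤ u ^ p * (Real.exp (-u) * u ^ (a - 1)) := by
              gcongr
              exact le_of_lt hu
          _ = Real.exp (-u) * u ^ (a + p - 1) := by
              rw [show a + p - 1 = p + (a - 1) by ring, Real.rpow_add hu0]
              ring
    _ ≤ ∫ u in Ioi 0, Real.exp (-u) * u ^ (a + p - 1) := by
        refine setIntegral_mono_set (Real.GammaIntegral_convergent (by linarith)) ?_
          (Ioi_subset_Ioi hy).eventuallyLE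
        filter_upwards [ae_restrict_mem measurableSet_Ioi] with u (hu : 0 < u)
        positivity
    _ = Real.Gamma (a + p) := (Real.Gamma_eq_integral (by linarith)).symm

theorem continuousOn_upperIncompleteGamma (ha : 0 < a) :
    ContinuousOn (upperIncompleteGamma a) (Ici 0) :=
  (Real.GammaIntegral_convergent ha).continuousOn_Ici_primitive_Ioi

theorem hasMellin_ofReal_gammaIntegrand {s : ℂ} (hs : 0 < (s + a).re) :
    HasMellin (fun u : ℝ => ((Real.exp (-u) * u ^ (a - 1) : ℝ) : ℂ)) (s + 1)
      (Complex.Gamma (s + a)) := by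
  have heq : EqOn (fun u : ℝ => (u : ℂ) ^ (s + 1 - 1) • ((Real.exp (-u) * u ^ (a - 1) : ℝ) : ℂ))
      (fun u : ℝ => (Real.exp (-u) : ℂ) * (u : ℂ) ^ (s + a - 1)) (Ioi 0) := fun u hu => by
    dsimp only
    rw [add_sub_cancel_right, smul_eq_mul, ofReal_mul, ofReal_cpow (le_of_lt hu),
      show s + a - 1 = s + (a - 1 : ℝ) by push_cast; ring,
      cpow_add _ _ (ofReal_ne_zero.2 (ne_of_gt hu))]
    ring
  refine ⟨(integrableOn_congr_fun heq measurableSet_Ioi).2 (Complex.GammaIntegral_convergent hs),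
    ?_⟩
  rw [Complex.Gamma_eq_integral hs, mellin, setIntegral_congr_fun measurableSet_Ioi heq]
  rfl

theorem ofReal_upperIncompleteGamma (a y : ℝ) :
    (upperIncompleteGamma a y : ℂ) = ∫ u in Ioi y, ((Real.exp (-u) * u ^ (a - 1) : ℝ) : ℂ) :=
  integral_ofReal.symm

theorem hasMellin_upperIncompleteGamma (ha : 0 < a) {s : ℂ} (hs : 0 < s.re) :
    HasMellin (fun y => (upperIncompleteGamma a y : ℂ)) s (Complex.Gamma (s + a) / s) := by
  have h := hasMellin_ofReal_gammaIntegrand (a := a) (s := s) (by simp; linarith)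
  simp_rw [ofReal_upperIncompleteGamma]
  rw [← inv_mul_eq_div, ← smul_eq_mul, ← h.2]
  exact hasMellin_integral_Ioi hs h.1

end UpperIncompleteGamma

theorem integrable_cpow_neg_mul_Gamma_div {r c a : ℝ} (hr : 0 < r) (hc : 0 < c) (ha : 0 ≤ a) :
    Integrable fun t : ℝ =>
      (r : ℂ) ^ (-(c + t * I)) * Complex.Gamma (c + t * I + a) / (c + t * I) := by
  have hbound : ∀ t : ℝ, ‖(r : ℂ) ^ (-(c + t * I)) / (c + t * I)‖ ≤ r ^ (-c) / c := fun t => by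
    have hre : (-((c : ℂ) + t * I)).re = -c := by simp
    have hnorm : c ≤ ‖(c : ℂ) + t * I‖ := by simpa using re_le_norm ((c : ℂ) + t * I)
    rw [norm_div, norm_cpow_eq_rpow_re_of_pos hr, hre]
    gcongr
  have hmeas : AEStronglyMeasurable (fun t : ℝ => (r : ℂ) ^ (-(c + t * I)) / (c + t * I)) :=
    (by fun_prop : Measurable _).aestronglyMeasurable
  refine ((Complex.integrable_Gamma_ofReal_add_mul_I (σ := c + a) (by linarith)).bdd_mul hmeas
    (ae_of_all _ hbound)).congr (ae_of_all _ fun t => ?_)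
  push_cast
  ring_nf

theorem mellinInv_cpow_neg_mul_Gamma_div {r a c ξ : ℝ} (hr : 0 < r) (ha : 0 < a) (hc : 0 < c)
    (hξ : 0 < ξ) :
    mellinInv c (fun s => (r : ℂ) ^ (-s) * Complex.Gamma (s + a) / s) ξ
      = upperIncompleteGamma a (r * ξ) := by
  set f : ℝ → ℂ := fun x => (upperIncompleteGamma a (r * x) : ℂ) with hf
  have hline : ∀ t : ℝ, 0 < ((c : ℂ) + t * I).re := by simpa using hc
  have hmellin : ∀ s : ℂ, 0 < s.re → mellin f s = (r : ℂ) ^ (-s) * Complex.Gamma (s + a) / s :=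
    fun s hs => by
      rw [hf, mellin_comp_mul_left (fun y => (upperIncompleteGamma a y : ℂ)) _ hr,
        (hasMellin_upperIncompleteGamma ha hs).2, smul_eq_mul, mul_div_assoc]
  have hconv : MellinConvergent f c :=
    (MellinConvergent.comp_mul_left hr).2 (hasMellin_upperIncompleteGamma ha (by simpa)).1
  have hvert : VerticalIntegrable (mellin f) c :=
    (integrable_cpow_neg_mul_Gamma_div hr hc ha.le).congr
      (ae_of_all _ fun t => (hmellin _ (hline t)).symm)
  have hcont : ContinuousAt f ξ :=
    continuous_ofReal.continuousAt.comp <|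
      ((continuousOn_upperIncompleteGamma ha).continuousAt (Ici_mem_nhds (by positivity))).comp
        (continuous_const_mul r).continuousAt
  calc mellinInv c (fun s => (r : ℂ) ^ (-s) * Complex.Gamma (s + a) / s) ξ
      = mellinInv c (mellin f) ξ := by
        rw [mellinInv, mellinInv]
        congr 1
        refine integral_congr_ae (ae_of_all _ fun t => ?_)
        simp only [hmellin _ (hline t)]
    _ = f ξ := mellinInv_mellin_eq c f hξ hconv hvert hcont

theorem heckeWeight_eq_upperIncompleteGamma {k : ℕ} (hk : 0 < k) {c ξ : ℝ} (hc : 0 < c)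
    (hξ : 0 < ξ) :
    heckeWeight k c ξ = upperIncompleteGamma (k / 2) (2 * π * ξ) / Real.Gamma (k / 2) := by
  have h := mellinInv_cpow_neg_mul_Gamma_div (r := 2 * π) (a := k / 2) (by positivity)
    (by positivity) hc hξ
  rw [← h, ← Complex.Gamma_ofReal, heckeWeight, mellinInv, real_smul, mul_div_assoc,
    ← integral_div]
  push_cast
  congr 1
  refine integral_congr_ae (ae_of_all _ fun t => ?_)
  simp only [smul_eq_mul]
  ring

theorem norm_heckeWeight_le {k : ℕ} (hk : 0 < k) {c ξ : ℝ} (hc : 0 < c) (hξ : 0 < ξ) :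
    ‖heckeWeight k c ξ‖ ≤ ((k : ℝ) / (π * ξ)) ^ k := by
  set a : ℝ := k / 2
  set y : ℝ := 2 * π * ξ with hy_def
  have ha : 0 < a := by positivity
  have hy : 0 < y := by positivity
  have hΓ : 0 < Real.Gamma a := Real.Gamma_pos_of_pos ha
  have hmarkov := upperIncompleteGamma_mul_rpow_le ha hy.le (Nat.cast_nonneg k)
  rw [Real.rpow_natCast] at hmarkov
  have hak : a + k ≤ 2 * k := by simp only [a]; linarith [(Nat.cast_nonneg k : (0 : ℝ) ≤ k)]
  rw [heckeWeight_eq_upperIncompleteGamma hk hc hξ, norm_div, norm_real, norm_real,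
    Real.norm_of_nonneg (upperIncompleteGamma_nonneg a hy.le), Real.norm_of_nonneg hΓ.le,
    div_le_iff₀ hΓ]
  calc upperIncompleteGamma a y = upperIncompleteGamma a y * y ^ k / y ^ k := by field_simp
    _ ≤ Real.Gamma a * (2 * k) ^ k / y ^ k := by
        refine div_le_div_of_nonneg_right (hmarkov.trans ((Real.Gamma_add_nat_le ha k).trans ?_))
          (by positivity)
        gcongr
    _ = (2 * k / y) ^ k * Real.Gamma a := by rw [div_pow]; ring
    _ = ((k : ℝ) / (π * ξ)) ^ k * Real.Gamma a := by
        rw [hy_def, mul_assoc, mul_div_mul_left _ _ two_ne_zero]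

/-- `|W_k(ξ)| ≤ (k/(πξ))^k` for all `ξ > 0`, and in particular
`|W_k(ξ)| ≤ (k/ξ) π^{-(k-1)}` for `ξ ≥ k`. -/
theorem heckeWeight_bound (k : ℕ) (hk : 2 ≤ k) (c : ℝ) (hc : 0 < c) :
    (∀ ξ : ℝ, 0 < ξ → ‖heckeWeight k c ξ‖ ≤ ((k : ℝ) / (Real.pi * ξ)) ^ k) ∧
    (∀ ξ : ℝ, (k : ℝ) ≤ ξ → ‖heckeWeight k c ξ‖ ≤ (k : ℝ) / ξ * (Real.pi ^ (k - 1))⁻¹) := by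
  have hk0 : 0 < k := by omega
  refine ⟨fun ξ hξ => norm_heckeWeight_le hk0 hc hξ, fun ξ hkξ => ?_⟩
  have hξ : 0 < ξ := lt_of_lt_of_le (by exact_mod_cast hk0) hkξ
  calc ‖heckeWeight k c ξ‖ ≤ ((k : ℝ) / (π * ξ)) ^ k := norm_heckeWeight_le hk0 hc hξ
    _ = ((k : ℝ) / ξ) ^ k * (π ^ k)⁻¹ := by
        rw [mul_comm π ξ, ← div_div, div_pow, div_eq_mul_inv]
    _ ≤ (k : ℝ) / ξ * (π ^ (k - 1))⁻¹ := by
        gcongr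
        · exact pow_le_of_le_one (by positivity) ((div_le_one hξ).2 hkξ) hk0.ne'
        · linarith [Real.pi_gt_three]
        · omega
end
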